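/- arXiv:1611.06655 — 6 statements merged into one kernel-verified Lean document; each statement's English description precedes it below -/
import Mathlib

section
/- Let 0 < a ≤ b, let p be a positive integer, and let z_1, …, z_p, z_1', …, z_p' be 2p mutually independent random variables with z_j ~ N(0, σ_j^2) and z_j' ~ N(0, σ_j^2), where a ≤ σ_j^2 ≤ b for every j. Then there exists a constant C > 0, depending only on a and b, such that for every α with 0 < α < 1/(2b^2), P( | (1/p) ∑_{j=1}^p z_j z_j' | > α ) ≤ 4 · exp( − C p α^2 ). -/
/-!
If `X ~ N(0, v)` and `Y ~ N(0, w)` are independent, integrating out `Y` first gives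
`E exp(tXY) = E exp(t²wX²/2) = (1 - t²vw)^(-1/2)`, which is at most `exp(t²vw)` as long as
`t²vw ≤ 1/2`. The products `z_j z_j'` are independent, so the moment generating function of their
sum is at most `exp(p t²b²)` on that range, and the Chernoff bound on both tails with `t`
proportional to `α` gives the claim; the hypothesis `α < 1/(2b²)` keeps such a `t` in the range.
-/

open MeasureTheory ProbabilityTheory Real
open scoped NNReal

namespace ProbabilityTheory

lemma integral_exp_mul_sq_gaussianReal {v : ℝ≥0} {c : ℝ} (hc : 2 * c * v < 1) :
    ∫ x, exp (c * x ^ 2) ∂gaussianReal 0 v = (√(1 - 2 * c * v))⁻¹ := by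
  rcases eq_or_ne v 0 with rfl | hv
  · simp [gaussianReal_zero_var]
  have hv' : (0 : ℝ) < v := by positivity
  obtain ⟨β, hβ⟩ : ∃ β, 2 * v * β = 1 - 2 * c * v := ⟨(1 - 2 * c * v) / (2 * v), by field_simp⟩
  have hβ_pos : 0 < β := pos_of_mul_pos_right (hβ ▸ sub_pos.2 hc) (by positivity)
  have hdens (x : ℝ) :
      gaussianPDFReal 0 v x • exp (c * x ^ 2) = (√(2 * π * v))⁻¹ * exp (-β * x ^ 2) := by
    rw [gaussianPDFReal_def, smul_eq_mul, mul_assoc, ← exp_add]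
    congr 2
    field_simp
    linear_combination x ^ 2 * hβ
  rw [integral_gaussianReal_eq_integral_smul hv]
  simp_rw [hdens]
  rw [integral_const_mul, integral_gaussian, ← hβ, ← sqrt_inv, ← sqrt_inv,
    ← sqrt_mul (by positivity)]
  congr 1
  field_simp

lemma integrable_exp_mul_sq_gaussianReal {v : ℝ≥0} {c : ℝ} (hc : 2 * c * v < 1) :
    Integrable (fun x ↦ exp (c * x ^ 2)) (gaussianReal 0 v) := by
  refine Integrable.of_integral_ne_zero ?_
  rw [integral_exp_mul_sq_gaussianReal hc]
  have : 0 < 1 - 2 * c * v := by linarith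
  positivity

lemma integral_exp_mul_gaussianReal (w : ℝ≥0) (s : ℝ) :
    ∫ y, exp (s * y) ∂gaussianReal 0 w = exp (w * s ^ 2 / 2) := by
  simpa [mgf] using congrFun (mgf_fun_id_gaussianReal (μ := 0) (v := w)) s

lemma integrable_exp_mul_mul_gaussianReal_prod {v w : ℝ≥0} {t : ℝ} (h : t ^ 2 * v * w < 1) :
    Integrable (fun q : ℝ × ℝ ↦ exp (t * (q.1 * q.2)))
      ((gaussianReal 0 v).prod (gaussianReal 0 w)) := by
  rw [integrable_prod_iff (by fun_prop)]
  refine ⟨.of_forall fun x ↦ ?_, ?_⟩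
  · simpa only [mul_assoc] using integrable_exp_mul_gaussianReal (μ := 0) (v := w) (t * x)
  · simp_rw [norm_of_nonneg (exp_pos _).le, ← mul_assoc, integral_exp_mul_gaussianReal]
    have hc : 2 * (t ^ 2 * w / 2) * v < 1 := by linarith
    convert integrable_exp_mul_sq_gaussianReal hc using 3
    ring

lemma integral_exp_mul_mul_gaussianReal_prod {v w : ℝ≥0} {t : ℝ} (h : t ^ 2 * v * w < 1) :
    ∫ q, exp (t * (q.1 * q.2)) ∂(gaussianReal 0 v).prod (gaussianReal 0 w) =
      (√(1 - t ^ 2 * v * w))⁻¹ := by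
  have hc : 2 * (t ^ 2 * w / 2) * v < 1 := by linarith
  rw [integral_prod _ (integrable_exp_mul_mul_gaussianReal_prod h)]
  simp_rw [← mul_assoc, integral_exp_mul_gaussianReal]
  convert integral_exp_mul_sq_gaussianReal hc using 4 <;> ring

lemma inv_sqrt_one_sub_le_exp {x : ℝ} (h0 : 0 ≤ x) (h1 : x ≤ 1 / 2) : (√(1 - x))⁻¹ ≤ exp x := by
  have hx : 0 < 1 - x := by linarith
  calc (√(1 - x))⁻¹ = √((1 - x)⁻¹) := (sqrt_inv _).symm
    _ ≤ √(exp x ^ 2) := by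
      gcongr
      rw [inv_le_iff_one_le_mul₀ hx, ← exp_nat_mul, Nat.cast_ofNat]
      nlinarith [mul_le_mul_of_nonneg_right (add_one_le_exp (2 * x)) hx.le]
    _ = exp x := sqrt_sq (exp_pos x).le

variable {Ω : Type*} [MeasurableSpace Ω] {μ : Measure Ω}

lemma measureReal_abs_ge_le_exp_mul_mgf [IsFiniteMeasure μ] {X : Ω → ℝ} {t : ℝ} (ε : ℝ)
    (ht : 0 ≤ t) (h_int : Integrable (fun ω ↦ exp (t * X ω)) μ)
    (h_int' : Integrable (fun ω ↦ exp (-t * X ω)) μ) :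
    μ.real {ω | ε ≤ |X ω|} ≤ exp (-t * ε) * (mgf X μ t + mgf X μ (-t)) := by
  have hsub : {ω | ε ≤ |X ω|} ⊆ {ω | ε ≤ X ω} ∪ {ω | X ω ≤ -ε} := fun ω (hω : ε ≤ |X ω|) ↦
    show ε ≤ X ω ∨ X ω ≤ -ε from (le_abs'.1 hω).symm
  calc μ.real {ω | ε ≤ |X ω|} ≤ μ.real {ω | ε ≤ X ω} + μ.real {ω | X ω ≤ -ε} :=
        (measureReal_mono hsub).trans (measureReal_union_le _ _)
    _ ≤ exp (-t * ε) * mgf X μ t + exp (- -t * -ε) * mgf X μ (-t) :=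
        add_le_add (measure_ge_le_exp_mul_mgf ε ht h_int)
          (measure_le_le_exp_mul_mgf (-ε) (neg_nonpos.2 ht) h_int')
    _ = exp (-t * ε) * (mgf X μ t + mgf X μ (-t)) := by ring_nf

lemma IndepFun.mgf_mul_of_gaussianReal [IsProbabilityMeasure μ] {X Y : Ω → ℝ}
    (hXY : IndepFun X Y μ) {v w : ℝ≥0} (hX : μ.map X = gaussianReal 0 v)
    (hY : μ.map Y = gaussianReal 0 w) {t : ℝ} (h : t ^ 2 * v * w < 1) :
    mgf (fun ω ↦ X ω * Y ω) μ t = (√(1 - t ^ 2 * v * w))⁻¹ := by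
  have hXm : AEMeasurable X μ := aemeasurable_of_map_neZero (by rw [hX]; infer_instance)
  have hYm : AEMeasurable Y μ := aemeasurable_of_map_neZero (by rw [hY]; infer_instance)
  have hmap : μ.map (fun ω ↦ (X ω, Y ω)) = (gaussianReal 0 v).prod (gaussianReal 0 w) := by
    rw [(indepFun_iff_map_prod_eq_prod_map_map hXm hYm).1 hXY, hX, hY]
  rw [← integral_exp_mul_mul_gaussianReal_prod h, ← hmap,
    integral_map (hXm.prodMk hYm) (by fun_prop)]
  rfl

lemma iIndepFun.prodMk_of_sumElim {ι γ : Type*} [Fintype ι] [MeasurableSpace γ]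
    {X Y : ι → Ω → γ} (hX : ∀ i, Measurable (X i)) (hY : ∀ i, Measurable (Y i))
    (h : iIndepFun (Sum.elim X Y) μ) :
    iIndepFun (fun i ω ↦ (X i ω, Y i ω)) μ := by
  have := h.isProbabilityMeasure
  have hXY : ∀ k, Measurable (Sum.elim X Y k) := Sum.forall.2 ⟨hX, hY⟩
  have hpair (i : ι) : μ.map (fun ω ↦ (X i ω, Y i ω)) = (μ.map (X i)).prod (μ.map (Y i)) :=
    (indepFun_iff_map_prod_eq_prod_map_map (hX i).aemeasurable (hY i).aemeasurable).1
      (h.indepFun Sum.inl_ne_inr)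
  have hblocks : (Measure.pi fun i ↦ μ.map (X i)).prod (Measure.pi fun i ↦ μ.map (Y i)) =
      (μ.map fun ω k ↦ Sum.elim X Y k ω).map (MeasurableEquiv.sumPiEquivProdPi fun _ ↦ γ) := by
    rw [h.map_fun_eq_pi_map fun k ↦ (hXY k).aemeasurable]
    exact (measurePreserving_sumPiEquivProdPi fun k ↦ μ.map (Sum.elim X Y k)).map_eq.symm
  rw [iIndepFun_iff_map_fun_eq_pi_map fun i ↦ ((hX i).prodMk (hY i)).aemeasurable]
  simp_rw [hpair]
  rw [← (measurePreserving_arrowProdEquivProdArrow γ γ ι _ _).symm.map_eq, hblocks,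
    Measure.map_map (by fun_prop) (by fun_prop),
    Measure.map_map (by fun_prop) (measurable_pi_lambda _ hXY)]
  rfl

lemma iIndepFun.mgf_sum_mul_of_gaussianReal {ι : Type*} [Fintype ι] {X Y : ι → Ω → ℝ}
    (hX : ∀ i, Measurable (X i)) (hY : ∀ i, Measurable (Y i)) (h : iIndepFun (Sum.elim X Y) μ)
    {v w : ι → ℝ≥0} (hXlaw : ∀ i, μ.map (X i) = gaussianReal 0 (v i))
    (hYlaw : ∀ i, μ.map (Y i) = gaussianReal 0 (w i)) {t : ℝ} (ht : ∀ i, t ^ 2 * v i * w i < 1) :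
    mgf (fun ω ↦ ∑ i, X i ω * Y i ω) μ t = ∏ i, (√(1 - t ^ 2 * v i * w i))⁻¹ := by
  have := h.isProbabilityMeasure
  have hprod : iIndepFun (fun i ω ↦ X i ω * Y i ω) μ :=
    (h.prodMk_of_sumElim hX hY).comp _ fun _ ↦ measurable_fst.mul measurable_snd
  have hsum := hprod.mgf_sum (t := t) (fun i ↦ (hX i).mul (hY i)) Finset.univ
  rw [Finset.sum_fn] at hsum
  rw [hsum]
  exact Finset.prod_congr rfl fun i _ ↦
    (h.indepFun Sum.inl_ne_inr).mgf_mul_of_gaussianReal (hXlaw i) (hYlaw i) (ht i)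

lemma iIndepFun.integrable_exp_mul_sum_mul_of_gaussianReal {ι : Type*} [Fintype ι]
    {X Y : ι → Ω → ℝ} (hX : ∀ i, Measurable (X i)) (hY : ∀ i, Measurable (Y i))
    (h : iIndepFun (Sum.elim X Y) μ) {v w : ι → ℝ≥0}
    (hXlaw : ∀ i, μ.map (X i) = gaussianReal 0 (v i))
    (hYlaw : ∀ i, μ.map (Y i) = gaussianReal 0 (w i)) {t : ℝ} (ht : ∀ i, t ^ 2 * v i * w i < 1) :
    Integrable (fun ω ↦ exp (t * ∑ i, X i ω * Y i ω)) μ := by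
  have := h.isProbabilityMeasure
  refine mgf_pos_iff.1 ?_
  rw [h.mgf_sum_mul_of_gaussianReal hX hY hXlaw hYlaw ht]
  exact Finset.prod_pos fun i _ ↦ inv_pos.2 (sqrt_pos.2 (sub_pos.2 (ht i)))

lemma iIndepFun.mgf_sum_mul_le_of_gaussianReal {ι : Type*} [Fintype ι]
    {X Y : ι → Ω → ℝ} (hX : ∀ i, Measurable (X i)) (hY : ∀ i, Measurable (Y i))
    (h : iIndepFun (Sum.elim X Y) μ) {v w : ι → ℝ≥0}
    (hXlaw : ∀ i, μ.map (X i) = gaussianReal 0 (v i))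
    (hYlaw : ∀ i, μ.map (Y i) = gaussianReal 0 (w i)) {B t : ℝ} (hvw : ∀ i, v i * w i ≤ B)
    (htB : t ^ 2 * B ≤ 1 / 2) :
    mgf (fun ω ↦ ∑ i, X i ω * Y i ω) μ t ≤ exp (Fintype.card ι * (t ^ 2 * B)) := by
  have hle (i : ι) : t ^ 2 * v i * w i ≤ t ^ 2 * B := by
    rw [mul_assoc]; exact mul_le_mul_of_nonneg_left (hvw i) (sq_nonneg t)
  rw [h.mgf_sum_mul_of_gaussianReal hX hY hXlaw hYlaw fun i ↦ by linarith [hle i],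
    exp_nat_mul, ← Finset.card_univ, ← Finset.prod_const]
  refine Finset.prod_le_prod (fun i _ ↦ by positivity) fun i _ ↦ ?_
  exact (inv_sqrt_one_sub_le_exp (by positivity) ((hle i).trans htB)).trans
    (exp_le_exp.2 (hle i))

lemma iIndepFun.measureReal_abs_sum_mul_ge_le_of_gaussianReal {ι : Type*} [Fintype ι]
    {X Y : ι → Ω → ℝ} (hX : ∀ i, Measurable (X i)) (hY : ∀ i, Measurable (Y i))
    (h : iIndepFun (Sum.elim X Y) μ) {v w : ι → ℝ≥0}
    (hXlaw : ∀ i, μ.map (X i) = gaussianReal 0 (v i))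
    (hYlaw : ∀ i, μ.map (Y i) = gaussianReal 0 (w i)) {B t : ℝ} (hvw : ∀ i, v i * w i ≤ B)
    (ht : 0 ≤ t) (htB : t ^ 2 * B ≤ 1 / 2) (ε : ℝ) :
    μ.real {ω | ε ≤ |∑ i, X i ω * Y i ω|} ≤
      2 * exp (-t * ε + Fintype.card ι * (t ^ 2 * B)) := by
  have := h.isProbabilityMeasure
  have hlt {s : ℝ} (hs : s ^ 2 = t ^ 2) (i : ι) : s ^ 2 * v i * w i < 1 := by
    rw [hs, mul_assoc]
    nlinarith [mul_le_mul_of_nonneg_left (hvw i) (sq_nonneg t)]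
  have htB' : (-t) ^ 2 * B ≤ 1 / 2 := by rwa [neg_sq]
  calc μ.real {ω | ε ≤ |∑ i, X i ω * Y i ω|}
      ≤ exp (-t * ε) * (mgf (fun ω ↦ ∑ i, X i ω * Y i ω) μ t +
          mgf (fun ω ↦ ∑ i, X i ω * Y i ω) μ (-t)) :=
        measureReal_abs_ge_le_exp_mul_mgf ε ht
          (h.integrable_exp_mul_sum_mul_of_gaussianReal hX hY hXlaw hYlaw (hlt rfl))
          (h.integrable_exp_mul_sum_mul_of_gaussianReal hX hY hXlaw hYlaw (hlt (neg_sq t)))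
    _ ≤ exp (-t * ε) * (exp (Fintype.card ι * (t ^ 2 * B)) +
          exp (Fintype.card ι * ((-t) ^ 2 * B))) := by
        gcongr
        exacts [h.mgf_sum_mul_le_of_gaussianReal hX hY hXlaw hYlaw hvw htB,
          h.mgf_sum_mul_le_of_gaussianReal hX hY hXlaw hYlaw hvw htB']
    _ = 2 * exp (-t * ε + Fintype.card ι * (t ^ 2 * B)) := by
        rw [neg_sq, exp_add]; ring

end ProbabilityTheory

/-- Deviation bound for the average of products of independent pairs of
centered Gaussians with variances in `[a, b]`. -/
theorem stmt_3 (a b : ℝ) (ha : 0 < a) (hab : a ≤ b) :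
    ∃ C > (0 : ℝ),
      ∀ (Ω : Type) [MeasureSpace Ω] [IsProbabilityMeasure (ℙ : Measure Ω)]
        (p : ℕ), 0 < p →
        ∀ (σsq : Fin p → ℝ≥0), (∀ j, a ≤ (σsq j : ℝ) ∧ (σsq j : ℝ) ≤ b) →
        ∀ (z z' : Fin p → Ω → ℝ),
        (∀ j, Measurable (z j)) → (∀ j, Measurable (z' j)) →
        iIndepFun (Sum.elim z z') ℙ →
        (∀ j, Measure.map (z j) ℙ = gaussianReal 0 (σsq j)) →
        (∀ j, Measure.map (z' j) ℙ = gaussianReal 0 (σsq j)) →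
        ∀ α : ℝ, 0 < α → α < 1 / (2 * b ^ 2) →
          ℙ {ω | α < |(1 / (p : ℝ)) * ∑ j, z j ω * z' j ω|}
            ≤ ENNReal.ofReal (4 * Real.exp (-(C * p * α ^ 2))) := by
  have hb : 0 < b := ha.trans_le hab
  -- The Chernoff parameter is `t = kα`: `k ≤ b` keeps `t²b² ≤ 1/2` when `α < 1/(2b²)`, and
  -- `kb² ≤ 1/2` makes the exponent `-tα + t²b²` at most `-kα²/2`.
  obtain ⟨k, hk, hkb, hkb2⟩ : ∃ k : ℝ, 0 < k ∧ k ≤ b ∧ k * b ^ 2 ≤ 1 / 2 :=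
    ⟨min b (1 / (2 * b ^ 2)), by positivity, min_le_left _ _,
      (mul_le_mul_of_nonneg_right (min_le_right _ _) (by positivity)).trans_eq (by field_simp)⟩
  refine ⟨k / 2, by positivity, fun Ω _ _ p hp σsq hσ z z' hz hz' hind hlz hlz' α hα hαb ↦ ?_⟩
  have hσb (j : Fin p) : (σsq j : ℝ) * σsq j ≤ b ^ 2 := by nlinarith [hσ j]
  have htb : (k * α) ^ 2 * b ^ 2 ≤ 1 / 2 := by
    rw [lt_div_iff₀ (by positivity)] at hαb
    have h1 : k * α * b < 1 / 2 := by
      nlinarith [mul_le_mul_of_nonneg_right hkb (by positivity : 0 ≤ α * b)]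
    have h0 : 0 ≤ k * α * b := by positivity
    nlinarith
  have hexp : -(k * α) * (p * α) + p * ((k * α) ^ 2 * b ^ 2) ≤ -(k / 2 * p * α ^ 2) := by
    nlinarith [mul_le_mul_of_nonneg_left hkb2 (by positivity : (0 : ℝ) ≤ p * k * α ^ 2)]
  have hsub : {ω | α < |(1 / (p : ℝ)) * ∑ j, z j ω * z' j ω|} ⊆
      {ω | p * α ≤ |∑ j, z j ω * z' j ω|} := by
    intro ω (hω : α < |(1 / (p : ℝ)) * ∑ j, z j ω * z' j ω|)
    rw [abs_mul, abs_of_pos (by positivity), one_div, lt_inv_mul_iff₀ (by positivity)] at hω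
    exact hω.le
  calc ℙ {ω | α < |(1 / (p : ℝ)) * ∑ j, z j ω * z' j ω|}
      ≤ ENNReal.ofReal ((ℙ : Measure Ω).real {ω | p * α ≤ |∑ j, z j ω * z' j ω|}) :=
        (measure_mono hsub).trans_eq (ofReal_measureReal (measure_ne_top _ _)).symm
    _ ≤ ENNReal.ofReal (4 * exp (-(k / 2 * p * α ^ 2))) := by
      refine ENNReal.ofReal_le_ofReal ((hind.measureReal_abs_sum_mul_ge_le_of_gaussianReal
        hz hz' hlz hlz' hσb (by positivity) htb _).trans ?_)
      rw [Fintype.card_fin]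
      linarith [exp_le_exp.2 hexp, exp_pos (-(k / 2 * p * α ^ 2))]
end

section
/- Let d < p and H be positive integers, let A be a d × H real matrix, B a (p − d) × H real matrix, and let C be the p × H matrix obtained by stacking A on top of B. Let λ > 0, c > 0, μ ∈ ℝ, and K ≥ 0 with ‖B^τ B − μ I_H‖_F ≤ K. Let ξ̂_i and ξ̂_j be two orthogonal unit eigenvectors of C C^τ with associated eigenvalues λ̂_i > 0 and λ̂_j > 0 respectively, and let ξ̃_i, ξ̃_j ∈ ℝ^d denote the vectors of their first d coordinates. If ‖ξ̃_i‖_2 ≥ c √(λ / λ̂_i) and ‖ξ̃_j‖_2 ≥ c √(λ / λ̂_j), then the cosine of the angle between ξ̃_i and ξ̃_j satisfies |⟨ξ̃_i, ξ̃_j⟩| / ( ‖ξ̃_i‖_2 ‖ξ̃_j‖_2 ) ≤ K / (c^2 λ). -/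
/-!
Write `C` for `A` stacked on `B` and `ηₖ = Cᵀ ξₖ`. Then `C ηₖ = λₖ ξₖ`, so `A ηₖ = λₖ ξ̃ₖ`, and the
`ηₖ` are orthogonal with `‖ηₖ‖² = λₖ`. Splitting `0 = ⟨C ηᵢ, C ηⱼ⟩` into its two blocks gives
`λᵢ λⱼ ⟨ξ̃ᵢ, ξ̃ⱼ⟩ = -⟨B ηᵢ, B ηⱼ⟩ = -⟨ηᵢ, (BᵀB - μ I) ηⱼ⟩`, since `⟨ηᵢ, ηⱼ⟩ = 0`. By Cauchy–Schwarz
the right side is at most `K √(λᵢ λⱼ)`, while the hypotheses bound `‖ξ̃ᵢ‖ ‖ξ̃ⱼ‖` below by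
`c² λ / √(λᵢ λⱼ)`.
-/

open Matrix

/-- The Euclidean norm of a real vector. -/
noncomputable def vecNorm {ι : Type*} [Fintype ι] (v : ι → ℝ) : ℝ :=
  Real.sqrt (∑ i, v i ^ 2)

/-- The Frobenius norm of a real matrix. -/
noncomputable def frobNorm {ι κ : Type*} [Fintype ι] [Fintype κ] (M : Matrix ι κ ℝ) : ℝ :=
  Real.sqrt (∑ i, ∑ j, M i j ^ 2)

lemma vecNorm_eq_sqrt_dotProduct {ι : Type*} [Fintype ι] (v : ι → ℝ) :
    vecNorm v = √(v ⬝ᵥ v) := by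
  simp only [vecNorm, dotProduct, sq]

lemma abs_dotProduct_mulVec_le_frobNorm {m n : Type*} [Fintype m] [Fintype n]
    (M : Matrix m n ℝ) (x : m → ℝ) (y : n → ℝ) :
    |x ⬝ᵥ M *ᵥ y| ≤ frobNorm M * (vecNorm x * vecNorm y) := by
  have hsum : x ⬝ᵥ M *ᵥ y = ∑ q : m × n, M q.1 q.2 * (x q.1 * y q.2) := by
    simp only [Fintype.sum_prod_type, dotProduct, mulVec, Finset.mul_sum]
    exact Finset.sum_congr rfl fun i _ => Finset.sum_congr rfl fun j _ => by ring
  have hsq : ∑ q : m × n, (x q.1 * y q.2) ^ 2 = (∑ i, x i ^ 2) * ∑ j, y j ^ 2 := by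
    rw [Fintype.sum_prod_type, Finset.sum_mul_sum]
    exact Finset.sum_congr rfl fun i _ => Finset.sum_congr rfl fun j _ => by ring
  calc |x ⬝ᵥ M *ᵥ y| = √((x ⬝ᵥ M *ᵥ y) ^ 2) := (Real.sqrt_sq_eq_abs _).symm
    _ ≤ √((∑ q : m × n, M q.1 q.2 ^ 2) * ∑ q : m × n, (x q.1 * y q.2) ^ 2) := by
        rw [hsum]
        exact Real.sqrt_le_sqrt (Finset.sum_mul_sq_le_sq_mul_sq _ _ _)
    _ = frobNorm M * (vecNorm x * vecNorm y) := by
        rw [hsq, Real.sqrt_mul (by positivity), Real.sqrt_mul (by positivity), frobNorm,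
          Fintype.sum_prod_type, vecNorm, vecNorm]

lemma mulVec_dotProduct_mulVec {R m n : Type*} [CommSemiring R] [Fintype m] [Fintype n]
    (N : Matrix m n R) (u v : n → R) :
    N *ᵥ u ⬝ᵥ N *ᵥ v = u ⬝ᵥ (Nᵀ * N) *ᵥ v := by
  rw [dotProduct_mulVec, ← vecMul_transpose, vecMul_vecMul, dotProduct_mulVec]

lemma transpose_mulVec_dotProduct_of_mulVec_eq_smul {R m n : Type*} [CommSemiring R]
    [Fintype m] [Fintype n] (C : Matrix m n R) (x : m → R) {y : m → R} {l : R}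
    (hy : (C * Cᵀ) *ᵥ y = l • y) :
    Cᵀ *ᵥ x ⬝ᵥ Cᵀ *ᵥ y = l * (x ⬝ᵥ y) := by
  rw [mulVec_dotProduct_mulVec, transpose_transpose, hy, dotProduct_smul, smul_eq_mul]

section Stacked

variable {m₁ m₂ n : Type*} [Fintype m₁] [Fintype m₂] [Fintype n] [DecidableEq n]

lemma mul_mul_dotProduct_inl_eq_neg {R : Type*} [CommRing R]
    (A : Matrix m₁ n R) (B : Matrix m₂ n R) (μ : R) {ξi ξj : m₁ ⊕ m₂ → R} {li lj : R}
    (hi : (fromRows A B * (fromRows A B)ᵀ) *ᵥ ξi = li • ξi)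
    (hj : (fromRows A B * (fromRows A B)ᵀ) *ᵥ ξj = lj • ξj) (horth : ξi ⬝ᵥ ξj = 0) :
    li * lj * ((ξi ∘ Sum.inl) ⬝ᵥ (ξj ∘ Sum.inl)) =
      -((fromRows A B)ᵀ *ᵥ ξi ⬝ᵥ (Bᵀ * B - μ • 1) *ᵥ (fromRows A B)ᵀ *ᵥ ξj) := by
  set C := fromRows A B
  set ηi := Cᵀ *ᵥ ξi
  set ηj := Cᵀ *ᵥ ξj
  have hCi : C *ᵥ ηi = li • ξi := by rw [mulVec_mulVec, hi]
  have hCj : C *ᵥ ηj = lj • ξj := by rw [mulVec_mulVec, hj]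
  have hAi : A *ᵥ ηi = li • (ξi ∘ Sum.inl) := funext fun a => by
    simpa [C] using congrFun hCi (Sum.inl a)
  have hAj : A *ᵥ ηj = lj • (ξj ∘ Sum.inl) := funext fun a => by
    simpa [C] using congrFun hCj (Sum.inl a)
  have hη : ηi ⬝ᵥ ηj = 0 := by
    rw [transpose_mulVec_dotProduct_of_mulVec_eq_smul C ξi hj, horth, mul_zero]
  have hblocks : C *ᵥ ηi ⬝ᵥ C *ᵥ ηj = A *ᵥ ηi ⬝ᵥ A *ᵥ ηj + B *ᵥ ηi ⬝ᵥ B *ᵥ ηj := by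
    rw [fromRows_mulVec, fromRows_mulVec, sumElim_dotProduct_sumElim]
  have hB : B *ᵥ ηi ⬝ᵥ B *ᵥ ηj = ηi ⬝ᵥ (Bᵀ * B - μ • 1) *ᵥ ηj := by
    rw [mulVec_dotProduct_mulVec, sub_mulVec, dotProduct_sub, smul_mulVec, one_mulVec,
      dotProduct_smul, hη, smul_zero, sub_zero]
  rw [hCi, hCj, hAi, hAj, hB, smul_dotProduct, dotProduct_smul, dotProduct_smul,
    smul_dotProduct, horth] at hblocks
  simp only [smul_eq_mul, mul_zero] at hblocks
  linear_combination -hblocks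

lemma abs_dotProduct_inl_mul_sqrt_le (A : Matrix m₁ n ℝ) (B : Matrix m₂ n ℝ) {μ K : ℝ}
    (hB : frobNorm (Bᵀ * B - μ • 1) ≤ K) {ξi ξj : m₁ ⊕ m₂ → ℝ} {li lj : ℝ}
    (hli : 0 < li) (hlj : 0 < lj)
    (hi : (fromRows A B * (fromRows A B)ᵀ) *ᵥ ξi = li • ξi)
    (hj : (fromRows A B * (fromRows A B)ᵀ) *ᵥ ξj = lj • ξj)
    (huniti : ξi ⬝ᵥ ξi = 1) (hunitj : ξj ⬝ᵥ ξj = 1) (horth : ξi ⬝ᵥ ξj = 0) :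
    |(ξi ∘ Sum.inl) ⬝ᵥ (ξj ∘ Sum.inl)| * (√li * √lj) ≤ K := by
  set C := fromRows A B
  have hnorm : ∀ {ξ : m₁ ⊕ m₂ → ℝ} {l : ℝ}, (C * Cᵀ) *ᵥ ξ = l • ξ → ξ ⬝ᵥ ξ = 1 →
      vecNorm (Cᵀ *ᵥ ξ) = √l := fun hξ hunit => by
    rw [vecNorm_eq_sqrt_dotProduct, transpose_mulVec_dotProduct_of_mulVec_eq_smul C _ hξ,
      hunit, mul_one]
  have hs : 0 < √li * √lj := by positivity
  have hs2 : (√li * √lj) ^ 2 = li * lj := by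
    rw [mul_pow, Real.sq_sqrt hli.le, Real.sq_sqrt hlj.le]
  refine le_of_mul_le_mul_right ?_ hs
  calc |(ξi ∘ Sum.inl) ⬝ᵥ (ξj ∘ Sum.inl)| * (√li * √lj) * (√li * √lj)
      = |Cᵀ *ᵥ ξi ⬝ᵥ (Bᵀ * B - μ • 1) *ᵥ Cᵀ *ᵥ ξj| := by
        have hcross := congrArg abs (mul_mul_dotProduct_inl_eq_neg A B μ hi hj horth)
        rw [abs_neg, abs_mul, abs_of_pos (mul_pos hli hlj)] at hcross
        rw [← hcross, ← hs2]
        ring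
    _ ≤ frobNorm (Bᵀ * B - μ • 1) * (√li * √lj) := by
        rw [← hnorm hi huniti, ← hnorm hj hunitj]
        exact abs_dotProduct_mulVec_le_frobNorm _ _ _
    _ ≤ K * (√li * √lj) := mul_le_mul_of_nonneg_right hB hs.le

end Stacked

lemma mul_sqrt_le_of_mul_sqrt_div_le {c lam l x : ℝ} (hl : 0 < l) (h : c * √(lam / l) ≤ x) :
    c * √lam ≤ x * √l := by
  calc c * √lam = c * √(lam / l) * √l := by
        rw [mul_assoc, ← Real.sqrt_mul' _ hl.le, div_mul_cancel₀ _ hl.ne']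
    _ ≤ x * √l := mul_le_mul_of_nonneg_right h (Real.sqrt_nonneg _)

theorem stmt_6_general (p d H : ℕ)
    (A : Matrix (Fin d) (Fin H) ℝ) (B : Matrix (Fin (p - d)) (Fin H) ℝ)
    (lam c μ K : ℝ) (hlam : 0 < lam) (hc : 0 < c) (hK : 0 ≤ K)
    (hB : frobNorm (Bᵀ * B - μ • (1 : Matrix (Fin H) (Fin H) ℝ)) ≤ K)
    (lami lamj : ℝ) (hlami : 0 < lami) (hlamj : 0 < lamj)
    (ξi ξj : Fin d ⊕ Fin (p - d) → ℝ)
    (heigi : (Matrix.fromRows A B * (Matrix.fromRows A B)ᵀ).mulVec ξi = lami • ξi)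
    (heigj : (Matrix.fromRows A B * (Matrix.fromRows A B)ᵀ).mulVec ξj = lamj • ξj)
    (huniti : dotProduct ξi ξi = 1)
    (hunitj : dotProduct ξj ξj = 1)
    (horth : dotProduct ξi ξj = 0)
    (hproji : c * Real.sqrt (lam / lami) ≤ vecNorm (fun a : Fin d => ξi (Sum.inl a)))
    (hprojj : c * Real.sqrt (lam / lamj) ≤ vecNorm (fun a : Fin d => ξj (Sum.inl a))) :
    |∑ a : Fin d, ξi (Sum.inl a) * ξj (Sum.inl a)|
        / (vecNorm (fun a : Fin d => ξi (Sum.inl a))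
            * vecNorm (fun a : Fin d => ξj (Sum.inl a)))
      ≤ K / (c ^ 2 * lam) := by
  have hnum := abs_dotProduct_inl_mul_sqrt_le A B hB hlami hlamj heigi heigj huniti hunitj horth
  have hi := mul_sqrt_le_of_mul_sqrt_div_le hlami hproji
  have hj := mul_sqrt_le_of_mul_sqrt_div_le hlamj hprojj
  have hden : c ^ 2 * lam ≤ vecNorm (fun a => ξi (Sum.inl a)) * vecNorm (fun a => ξj (Sum.inl a))
      * (√lami * √lamj) := by
    calc c ^ 2 * lam = (c * √lam) * (c * √lam) := by
          rw [mul_mul_mul_comm, Real.mul_self_sqrt hlam.le, sq]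
      _ ≤ _ := mul_le_mul hi hj (by positivity) ((by positivity : 0 ≤ c * √lam).trans hi)
      _ = _ := by ring
  have hs : 0 < √lami * √lamj := by positivity
  rw [← mul_div_mul_right _ _ hs.ne']
  exact div_le_div₀ hK hnum (by positivity) hden

/-- Near-orthogonality of the first-`d`-coordinate projections of
eigenvectors of `C Cᵀ`, where `C` stacks `A` on top of `B`. -/
theorem stmt_6 (p d H : ℕ) (hdp : d < p)
    (A : Matrix (Fin d) (Fin H) ℝ) (B : Matrix (Fin (p - d)) (Fin H) ℝ)
    (lam c μ K : ℝ) (hlam : 0 < lam) (hc : 0 < c) (hK : 0 ≤ K)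
    (hB : frobNorm (Bᵀ * B - μ • (1 : Matrix (Fin H) (Fin H) ℝ)) ≤ K)
    (lami lamj : ℝ) (hlami : 0 < lami) (hlamj : 0 < lamj)
    (ξi ξj : Fin d ⊕ Fin (p - d) → ℝ)
    (heigi : (Matrix.fromRows A B * (Matrix.fromRows A B)ᵀ).mulVec ξi = lami • ξi)
    (heigj : (Matrix.fromRows A B * (Matrix.fromRows A B)ᵀ).mulVec ξj = lamj • ξj)
    (huniti : dotProduct ξi ξi = 1)
    (hunitj : dotProduct ξj ξj = 1)
    (horth : dotProduct ξi ξj = 0)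
    (hproji : c * Real.sqrt (lam / lami) ≤ vecNorm (fun a : Fin d => ξi (Sum.inl a)))
    (hprojj : c * Real.sqrt (lam / lamj) ≤ vecNorm (fun a : Fin d => ξj (Sum.inl a))) :
    |∑ a : Fin d, ξi (Sum.inl a) * ξj (Sum.inl a)|
        / (vecNorm (fun a : Fin d => ξi (Sum.inl a))
            * vecNorm (fun a : Fin d => ξj (Sum.inl a)))
      ≤ K / (c ^ 2 * lam) :=
  stmt_6_general p d H A B lam c μ K hlam hc hK hB lami lamj hlami hlamj ξi ξj heigi heigj huniti
    hunitj horth hproji hprojj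
end

section
/- Let 0 < C_min ≤ C_max. There exists a constant ζ with 0 < ζ < 1, depending only on C_min and C_max, such that the following holds: for every positive integers d and p with 2 ≤ d ≤ p, every real symmetric positive definite p × p matrix A with C_min ≤ λ_min(A) ≤ λ_max(A) ≤ C_max, and every p × d real matrix B with orthonormal columns, one has | B_{*,i}^τ A^τ A B_{*,j} | ≤ ζ · ‖A B_{*,i}‖_2 ‖A B_{*,j}‖_2 for all i ≠ j, where B_{*,i} denotes the i-th column of B. -/
/-!
Write `T` for `A` acting on Euclidean space, `u, v` for two orthonormal columns of `B`,
`s = ‖T u‖`, `t = ‖T v‖`, `P = ⟪T u, T v⟫`. The eigenvalue bounds give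
`Cmin² ‖w‖² ≤ ‖T w‖² ≤ Cmax² ‖w‖²`. Applying the lower bound to `w = t u ± s v`, for which
`‖w‖² = s² + t²` and `‖T w‖² = 2 s² t² ± 2 s t P`, yields `s t ± P ≥ Cmin²`, i.e.
`|P| ≤ s t - Cmin²`. Since `s t ≤ Cmax²`, this is at most `(1 - (Cmin / Cmax)² / 2) s t`.
-/

open Matrix

open scoped InnerProductSpace RealInnerProductSpace

section Eigenbasis

variable {𝕜 E ι : Type*} [RCLike 𝕜] [NormedAddCommGroup E] [InnerProductSpace 𝕜 E] [Fintype ι]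

theorem LinearMap.IsSymmetric.norm_sq_apply_eq_sum {T : E →ₗ[𝕜] E} (hT : T.IsSymmetric)
    (b : OrthonormalBasis ι 𝕜 E) (μ : ι → ℝ) (hb : ∀ i, T (b i) = (μ i : 𝕜) • b i) (w : E) :
    ‖T w‖ ^ 2 = ∑ i, μ i ^ 2 * ‖⟪b i, w⟫_𝕜‖ ^ 2 := by
  rw [← b.sum_sq_norm_inner_right]
  congr! 1 with i
  rw [← hT, hb, inner_smul_left, RCLike.conj_ofReal, norm_mul, RCLike.norm_ofReal, mul_pow,
    sq_abs]

theorem LinearMap.IsSymmetric.sq_mul_norm_sq_le_norm_sq_apply {T : E →ₗ[𝕜] E}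
    (hT : T.IsSymmetric) (b : OrthonormalBasis ι 𝕜 E) {μ : ι → ℝ}
    (hb : ∀ i, T (b i) = (μ i : 𝕜) • b i) {m : ℝ} (hm : 0 ≤ m) (hμ : ∀ i, m ≤ |μ i|) (w : E) :
    m ^ 2 * ‖w‖ ^ 2 ≤ ‖T w‖ ^ 2 := by
  rw [hT.norm_sq_apply_eq_sum b μ hb, ← b.sum_sq_norm_inner_right, Finset.mul_sum]
  gcongr ∑ i, ?_ * _ with i
  rw [← sq_abs (μ i)]
  exact pow_le_pow_left₀ hm (hμ i) 2

theorem LinearMap.IsSymmetric.norm_sq_apply_le_sq_mul_norm_sq {T : E →ₗ[𝕜] E}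
    (hT : T.IsSymmetric) (b : OrthonormalBasis ι 𝕜 E) {μ : ι → ℝ}
    (hb : ∀ i, T (b i) = (μ i : 𝕜) • b i) {M : ℝ} (hμ : ∀ i, |μ i| ≤ M) (w : E) :
    ‖T w‖ ^ 2 ≤ M ^ 2 * ‖w‖ ^ 2 := by
  rw [hT.norm_sq_apply_eq_sum b μ hb, ← b.sum_sq_norm_inner_right, Finset.mul_sum]
  gcongr ∑ i, ?_ * _ with i
  rw [← sq_abs (μ i)]
  exact pow_le_pow_left₀ (abs_nonneg _) (hμ i) 2

end Eigenbasis

theorem Matrix.IsHermitian.toEuclideanLin_eigenvectorBasis {𝕜 n : Type*} [RCLike 𝕜] [Fintype n]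
    [DecidableEq n] {A : Matrix n n 𝕜} (hA : A.IsHermitian) (j : n) :
    toEuclideanLin A (hA.eigenvectorBasis j) =
      (hA.eigenvalues j : 𝕜) • hA.eigenvectorBasis j := by
  rw [toLpLin_apply, hA.mulVec_eigenvectorBasis, ← RCLike.real_smul_eq_coe_smul]
  rfl

theorem abs_inner_map_le_norm_mul_norm_sub {E F : Type*} [NormedAddCommGroup E]
    [InnerProductSpace ℝ E] [NormedAddCommGroup F] [InnerProductSpace ℝ F] (T : E →ₗ[ℝ] F)
    {c : ℝ} (hc : 0 < c) (hT : ∀ w, c * ‖w‖ ^ 2 ≤ ‖T w‖ ^ 2) {u v : E} (hu : ‖u‖ = 1)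
    (hv : ‖v‖ = 1) (huv : ⟪u, v⟫ = 0) :
    |⟪T u, T v⟫| ≤ ‖T u‖ * ‖T v‖ - c := by
  set s := ‖T u‖ with hs_def
  set t := ‖T v‖ with ht_def
  set P := ⟪T u, T v⟫ with hP_def
  have hs : 0 < s := by
    have := hT u
    rw [hu] at this
    nlinarith [norm_nonneg (T u)]
  have ht : 0 < t := by
    have := hT v
    rw [hv] at this
    nlinarith [norm_nonneg (T v)]
  have hst : 0 < s * t := mul_pos hs ht
  have key : ∀ σ : ℝ, σ ^ 2 = 1 → c ≤ s * t + σ * P := by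
    intro σ hσ
    have h := hT (t • u + (σ * s) • v)
    simp only [map_add, map_smul, norm_add_sq_real, inner_smul_left, inner_smul_right, norm_smul,
      Real.norm_eq_abs, mul_pow, sq_abs, huv, hu, hv, conj_trivial, ← hs_def, ← ht_def,
      ← hP_def, hσ, mul_zero, mul_one, one_mul, add_zero] at h
    refine le_of_mul_le_mul_left ?_ hst
    nlinarith [mul_nonneg hc.le (sq_nonneg (s - t))]
  rw [abs_le]
  constructor
  · linarith [key 1 (by norm_num)]
  · linarith [key (-1) (by norm_num)]

theorem Matrix.orthonormal_toLp_transpose_of_conjTranspose_mul_self {𝕜 m n : Type*} [RCLike 𝕜]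
    [Fintype m] [DecidableEq n] {B : Matrix m n 𝕜} (hB : Bᴴ * B = 1) :
    Orthonormal 𝕜 fun j => WithLp.toLp 2 (Bᵀ j) := by
  rw [orthonormal_iff_ite]
  intro i j
  rw [EuclideanSpace.inner_toLp_toLp, ← one_apply, ← hB, mul_apply, dotProduct]
  simp only [transpose_apply, conjTranspose_apply, Pi.star_apply, mul_comm]

theorem vecNorm_eq_norm {ι : Type*} [Fintype ι] (v : ι → ℝ) :
    vecNorm v = ‖WithLp.toLp 2 v‖ := by
  simp only [vecNorm, EuclideanSpace.norm_eq, Real.norm_eq_abs, sq_abs]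

theorem Matrix.dotProduct_transpose_mul_self_mulVec {m n : Type*} [Fintype m] [Fintype n]
    [DecidableEq n] (A : Matrix m n ℝ) (x y : n → ℝ) :
    x ⬝ᵥ (Aᵀ * A) *ᵥ y =
      ⟪toEuclideanLin A (WithLp.toLp 2 x), toEuclideanLin A (WithLp.toLp 2 y)⟫ := by
  rw [← mulVec_mulVec, dotProduct_mulVec, vecMul_transpose, toLpLin_toLp, toLpLin_toLp,
    EuclideanSpace.inner_toLp_toLp, star_trivial, dotProduct_comm]
  rfl

/-- Uniform angle bound: for a well-conditioned symmetric positive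
definite matrix `A` and any matrix `B` with orthonormal columns, the images under `A` of
distinct columns of `B` make an angle bounded away from zero. -/
theorem stmt_7 (Cmin Cmax : ℝ) (hCmin : 0 < Cmin) (hC : Cmin ≤ Cmax) :
    ∃ ζ : ℝ, 0 < ζ ∧ ζ < 1 ∧
      ∀ (d p : ℕ), 2 ≤ d → d ≤ p →
      ∀ (A : Matrix (Fin p) (Fin p) ℝ) (hA : A.IsHermitian), A.PosDef →
      (∀ i, Cmin ≤ hA.eigenvalues i ∧ hA.eigenvalues i ≤ Cmax) →
      ∀ B : Matrix (Fin p) (Fin d) ℝ, Bᵀ * B = 1 →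
      ∀ i j : Fin d, i ≠ j →
        |dotProduct (fun k => B k i) ((Aᵀ * A).mulVec fun k => B k j)|
          ≤ ζ * vecNorm (A.mulVec fun k => B k i) * vecNorm (A.mulVec fun k => B k j) := by
  have hCmax : 0 < Cmax := hCmin.trans_le hC
  have hratio : 0 < (Cmin / Cmax) ^ 2 ∧ (Cmin / Cmax) ^ 2 ≤ 1 :=
    ⟨by positivity, pow_le_one₀ (by positivity) ((div_le_one hCmax).2 hC)⟩
  refine ⟨1 - (Cmin / Cmax) ^ 2 / 2, by linarith, by linarith, ?_⟩
  intro d p _ _ A hA _ hspec B hB i j hij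
  set T := toEuclideanLin A
  have hT := isSymmetric_toEuclideanLin_iff.2 hA
  have hlower (w) : Cmin ^ 2 * ‖w‖ ^ 2 ≤ ‖T w‖ ^ 2 :=
    hT.sq_mul_norm_sq_le_norm_sq_apply _ hA.toEuclideanLin_eigenvectorBasis hCmin.le
      (fun k => (hspec k).1.trans (le_abs_self _)) w
  have hupper (w) : ‖T w‖ ^ 2 ≤ Cmax ^ 2 * ‖w‖ ^ 2 :=
    hT.norm_sq_apply_le_sq_mul_norm_sq _ hA.toEuclideanLin_eigenvectorBasis
      (fun k => abs_le.2 ⟨by linarith [(hspec k).1], (hspec k).2⟩) w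
  have hcols := orthonormal_toLp_transpose_of_conjTranspose_mul_self (B := B)
    (by rwa [conjTranspose_eq_transpose_of_trivial])
  have hnorm_le (k) : ‖T (WithLp.toLp 2 (Bᵀ k))‖ ≤ Cmax := by
    have := hupper (WithLp.toLp 2 (Bᵀ k))
    rw [hcols.1 k, one_pow, mul_one] at this
    exact (pow_le_pow_iff_left₀ (norm_nonneg _) hCmax.le two_ne_zero).1 this
  rw [dotProduct_transpose_mul_self_mulVec, vecNorm_eq_norm, vecNorm_eq_norm]
  change |⟪T (WithLp.toLp 2 (Bᵀ i)), T (WithLp.toLp 2 (Bᵀ j))⟫| ≤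
    _ * ‖T (WithLp.toLp 2 (Bᵀ i))‖ * ‖T (WithLp.toLp 2 (Bᵀ j))‖
  have hangle := abs_inner_map_le_norm_mul_norm_sub T (by positivity) hlower (hcols.1 i)
    (hcols.1 j) (hcols.2 hij)
  have hprod := mul_le_mul (hnorm_le i) (hnorm_le j) (norm_nonneg _) hCmax.le
  have hCmin_sq : Cmin ^ 2 = (Cmin / Cmax) ^ 2 * Cmax ^ 2 := by field_simp
  nlinarith
end

section
/- Let u and v be nonzero vectors in ℝ^p, and let P_u = u u^τ / ‖u‖_2^2 and P_v = v v^τ / ‖v‖_2^2 be the orthogonal projection matrices onto the lines spanned by u and v. Then ‖P_u − P_v‖_F ≤ 4 ‖u − v‖_2 / ‖v‖_2. -/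
open Matrix

/-- The orthogonal projection matrix onto the line spanned by a vector `u`. -/
noncomputable def lineProj {p : ℕ} (u : Fin p → ℝ) : Matrix (Fin p) (Fin p) ℝ :=
  (∑ k, u k ^ 2)⁻¹ • Matrix.vecMulVec u u

/-!
With `a = ‖u‖²`, `b = ‖v‖²`, `s = ⟨u, v⟩`, expanding the Frobenius norm gives
`‖P_u - P_v‖_F² = 2 - 2 s² / (a b)`, while `2 ‖u - v‖² / ‖v‖² = 2 (a - 2 s + b) / b`.
Their difference is `2 (a - s)² / (a b) ≥ 0`, so the bound even holds with constant `√2`.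
-/

section

variable {ι : Type*} [Fintype ι]

theorem dotProduct_self_pos {R : Type*} [Ring R] [LinearOrder R] [IsStrictOrderedRing R]
    {v : ι → R} (hv : v ≠ 0) : 0 < v ⬝ᵥ v :=
  (Fintype.sum_nonneg fun i => mul_self_nonneg (v i)).lt_of_ne'
    (dotProduct_self_eq_zero.not.2 hv)

theorem vecNorm_sq (v : ι → ℝ) : vecNorm v ^ 2 = v ⬝ᵥ v := by
  rw [vecNorm, Real.sq_sqrt (by positivity)]
  simp only [dotProduct, sq]

theorem frobNorm_sq {κ : Type*} [Fintype κ] (M : Matrix ι κ ℝ) :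
    frobNorm M ^ 2 = ∑ i, ∑ j, M i j ^ 2 :=
  Real.sq_sqrt (by positivity)

theorem sum_sum_sq_smul_vecMulVec_sub {R : Type*} [CommRing R] (α β : R) (u v : ι → R) :
    ∑ i, ∑ j, (α • vecMulVec u u - β • vecMulVec v v) i j ^ 2
      = α ^ 2 * (u ⬝ᵥ u) ^ 2 - 2 * α * β * (u ⬝ᵥ v) ^ 2 + β ^ 2 * (v ⬝ᵥ v) ^ 2 := calc
  _ = ∑ i, ∑ j, (α ^ 2 * ((u i * u i) * (u j * u j))
        - 2 * α * β * ((u i * v i) * (u j * v j)) + β ^ 2 * ((v i * v i) * (v j * v j))) := by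
    refine Finset.sum_congr rfl fun i _ => Finset.sum_congr rfl fun j _ => ?_
    simp only [Matrix.sub_apply, Matrix.smul_apply, vecMulVec_apply, smul_eq_mul]
    ring
  _ = _ := by
    simp only [Finset.sum_add_distrib, Finset.sum_sub_distrib, ← Finset.mul_sum,
      ← Finset.sum_mul, dotProduct, sq]

end

theorem lineProj_eq {p : ℕ} (u : Fin p → ℝ) :
    lineProj u = (u ⬝ᵥ u)⁻¹ • vecMulVec u u := by
  simp only [lineProj, dotProduct, sq]

theorem frobNorm_lineProj_sub_sq {p : ℕ} {u v : Fin p → ℝ} (hu : u ≠ 0) (hv : v ≠ 0) :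
    frobNorm (lineProj u - lineProj v) ^ 2
      = 2 - 2 * (u ⬝ᵥ v) ^ 2 / ((u ⬝ᵥ u) * (v ⬝ᵥ v)) := by
  have hu' := (dotProduct_self_pos hu).ne'
  have hv' := (dotProduct_self_pos hv).ne'
  rw [frobNorm_sq, lineProj_eq, lineProj_eq, sum_sum_sq_smul_vecMulVec_sub]
  field_simp
  ring

theorem frobNorm_lineProj_sub_le {p : ℕ} {u v : Fin p → ℝ} (hu : u ≠ 0) (hv : v ≠ 0) :
    frobNorm (lineProj u - lineProj v) ≤ √2 * vecNorm (u - v) / vecNorm v := by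
  have ha := dotProduct_self_pos hu
  have hb := dotProduct_self_pos hv
  refine le_of_pow_le_pow_left₀ two_ne_zero ?_ ?_
  · exact div_nonneg (mul_nonneg (Real.sqrt_nonneg _) (Real.sqrt_nonneg _))
      (Real.sqrt_nonneg _)
  rw [frobNorm_lineProj_sub_sq hu hv, div_pow, mul_pow, Real.sq_sqrt zero_le_two,
    vecNorm_sq (u - v), vecNorm_sq v]
  have hdist : (u - v) ⬝ᵥ (u - v) = u ⬝ᵥ u - 2 * (u ⬝ᵥ v) + v ⬝ᵥ v := by
    simp only [sub_dotProduct, dotProduct_sub, dotProduct_comm v u]; ring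
  have hgap : 2 * ((u - v) ⬝ᵥ (u - v)) / (v ⬝ᵥ v)
      - (2 - 2 * (u ⬝ᵥ v) ^ 2 / ((u ⬝ᵥ u) * (v ⬝ᵥ v)))
      = 2 * (u ⬝ᵥ u - u ⬝ᵥ v) ^ 2 / ((u ⬝ᵥ u) * (v ⬝ᵥ v)) := by
    rw [hdist]; field_simp; ring
  have : 0 ≤ 2 * (u ⬝ᵥ u - u ⬝ᵥ v) ^ 2 / ((u ⬝ᵥ u) * (v ⬝ᵥ v)) := by positivity
  linarith

/-- The Frobenius distance between the rank-one projections onto the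
lines spanned by `u` and `v` is at most `4 ‖u − v‖₂ / ‖v‖₂`. -/
theorem stmt_11 (p : ℕ) (u v : Fin p → ℝ) (hu : u ≠ 0) (hv : v ≠ 0) :
    frobNorm (lineProj u - lineProj v) ≤ 4 * vecNorm (u - v) / vecNorm v := by
  refine (frobNorm_lineProj_sub_le hu hv).trans ?_
  have : √2 ≤ 4 := Real.sqrt_le_iff.2 ⟨by norm_num, by norm_num⟩
  gcongr
  · exact Real.sqrt_nonneg _
  · exact Real.sqrt_nonneg _
end

section
/- Let X be a p × n real matrix, ỹ ∈ ℝ^n, μ > 0, and let β* ∈ ℝ^p be a vector whose support is contained in a set T ⊆ {1, …, p}. Define the Lasso objective L(β) = (1/(2n)) ‖ỹ − X^τ β‖_2^2 + μ ‖β‖_1, and let β̂ ∈ ℝ^p satisfy L(β̂) ≤ L(β*) (in particular this holds if β̂ is a global minimizer of L). If ‖ (1/n) X (ỹ − X^τ β*) ‖_∞ ≤ μ/2, then δ = β̂ − β* satisfies ‖δ_{T^c}‖_1 ≤ 3 ‖δ_T‖_1. -/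
open Matrix

/-- The entrywise supremum norm of a real vector. -/
noncomputable def vecSupNorm {ι : Type*} [Fintype ι] (v : ι → ℝ) : ℝ :=
  ⨆ i, |v i|

/-- The Lasso objective `L(β) = (1/(2n)) ‖ỹ − Xᵀβ‖₂² + μ ‖β‖₁`. -/
noncomputable def lassoObj {p n : ℕ} (X : Matrix (Fin p) (Fin n) ℝ)
    (ytil : Fin n → ℝ) (μ : ℝ) (β : Fin p → ℝ) : ℝ :=
  1 / (2 * n) * ∑ j, (ytil j - (Xᵀ.mulVec β) j) ^ 2 + μ * ∑ i, |β i|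

/-!
Write `δ = β̂ - β*` and `r = ỹ - Xᵀβ*`. Expanding the square in `L(β̂) ≤ L(β*)` and dropping
`(1/(2n)) ‖Xᵀδ‖₂² ≥ 0` gives the basic inequality `μ (‖β̂‖₁ - ‖β*‖₁) ≤ ⟨(1/n) X r, δ⟩`, whose
right side is at most `(μ/2) ‖δ‖₁` by Hölder and the gradient bound. Since `β*` vanishes off `T`,
the triangle inequality gives `‖β̂‖₁ - ‖β*‖₁ ≥ ‖δ_{Tᶜ}‖₁ - ‖δ_T‖₁`, so
`‖δ_{Tᶜ}‖₁ - ‖δ_T‖₁ ≤ (‖δ_T‖₁ + ‖δ_{Tᶜ}‖₁) / 2`, which is the cone condition.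
-/

open Finset

section Vectors

variable {ι : Type*} [Fintype ι]

theorem abs_apply_le_vecSupNorm (v : ι → ℝ) (i : ι) : |v i| ≤ vecSupNorm v :=
  le_ciSup (f := fun i => |v i|) (Set.finite_range _).bddAbove i

theorem dotProduct_le_vecSupNorm_mul_sum_abs (u v : ι → ℝ) :
    u ⬝ᵥ v ≤ vecSupNorm u * ∑ i, |v i| := by
  rw [mul_sum]
  refine sum_le_sum fun i _ => ?_
  calc u i * v i ≤ |u i| * |v i| := by rw [← abs_mul]; exact le_abs_self _
    _ ≤ vecSupNorm u * |v i| :=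
      mul_le_mul_of_nonneg_right (abs_apply_le_vecSupNorm u i) (abs_nonneg _)

theorem sum_abs_sub_sum_abs_le_of_eq_zero_off [DecidableEq ι] (T : Finset ι)
    {βstar : ι → ℝ} (hsupp : ∀ i ∉ T, βstar i = 0) (β : ι → ℝ) :
    ∑ i, |βstar i| - ∑ i, |β i|
      ≤ ∑ i ∈ T, |β i - βstar i| - ∑ i ∈ Tᶜ, |β i - βstar i| := by
  have h_on : ∑ i ∈ T, |βstar i| - ∑ i ∈ T, |β i| ≤ ∑ i ∈ T, |β i - βstar i| := by
    rw [← sum_sub_distrib]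
    exact sum_le_sum fun i _ => (abs_sub_abs_le_abs_sub _ _).trans_eq (abs_sub_comm _ _)
  have h_off : ∀ i ∈ Tᶜ, |βstar i| = 0 ∧ |β i - βstar i| = |β i| := fun i hi => by
    simp [hsupp i (mem_compl.mp hi)]
  rw [← sum_add_sum_compl T, ← sum_add_sum_compl T fun i => |β i|,
    sum_eq_zero fun i hi => (h_off i hi).1, sum_congr rfl fun i hi => (h_off i hi).2]
  linarith

end Vectors

theorem sum_sq_sub_transpose_mulVec {ι κ : Type*} [Fintype ι] [Fintype κ]
    (X : Matrix ι κ ℝ) (r : κ → ℝ) (δ : ι → ℝ) :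
    ∑ j, (r j - (Xᵀ *ᵥ δ) j) ^ 2
      = ∑ j, r j ^ 2 - 2 * ((X *ᵥ r) ⬝ᵥ δ) + ∑ j, (Xᵀ *ᵥ δ) j ^ 2 := by
  have h_adj : (X *ᵥ r) ⬝ᵥ δ = ∑ j, r j * (Xᵀ *ᵥ δ) j := by
    rw [← vecMul_transpose, ← dotProduct_mulVec]; rfl
  simp only [h_adj, sub_sq, sum_add_distrib, sum_sub_distrib, mul_sum, mul_assoc]

theorem lassoObj_basic_inequality {p n : ℕ} (X : Matrix (Fin p) (Fin n) ℝ) (ytil : Fin n → ℝ)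
    (μ : ℝ) {βstar βhat : Fin p → ℝ} (hopt : lassoObj X ytil μ βhat ≤ lassoObj X ytil μ βstar) :
    μ * (∑ i, |βhat i| - ∑ i, |βstar i|)
      ≤ ((n : ℝ)⁻¹ • X *ᵥ (ytil - Xᵀ *ᵥ βstar)) ⬝ᵥ (βhat - βstar) := by
  have h_res : ytil - Xᵀ *ᵥ βhat = (ytil - Xᵀ *ᵥ βstar) - Xᵀ *ᵥ (βhat - βstar) := by
    rw [mulVec_sub]; abel
  have h_sq : ∑ j, (ytil j - (Xᵀ *ᵥ βhat) j) ^ 2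
      = ∑ j, ((ytil - Xᵀ *ᵥ βstar) j - (Xᵀ *ᵥ (βhat - βstar)) j) ^ 2 :=
    sum_congr rfl fun j _ => by rw [← Pi.sub_apply ytil _ j, h_res, Pi.sub_apply]
  have h_quad : 0 ≤ (n : ℝ)⁻¹ / 2 * ∑ j, (Xᵀ *ᵥ (βhat - βstar)) j ^ 2 := by positivity
  have h_half : 1 / (2 * (n : ℝ)) = (n : ℝ)⁻¹ / 2 := by ring
  unfold lassoObj at hopt
  rw [h_half, h_sq, sum_sq_sub_transpose_mulVec] at hopt
  rw [smul_dotProduct, smul_eq_mul]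
  simp only [Pi.sub_apply] at hopt
  linarith

theorem stmt_13_general (p n : ℕ)
    (X : Matrix (Fin p) (Fin n) ℝ) (ytil : Fin n → ℝ) (μ : ℝ) (hμ : 0 < μ)
    (βstar : Fin p → ℝ) (T : Finset (Fin p)) (hsupp : ∀ i ∉ T, βstar i = 0)
    (βhat : Fin p → ℝ)
    (hopt : lassoObj X ytil μ βhat ≤ lassoObj X ytil μ βstar)
    (hgrad : vecSupNorm ((n : ℝ)⁻¹ • X.mulVec (ytil - Xᵀ.mulVec βstar)) ≤ μ / 2) :
    (∑ i ∈ Tᶜ, |βhat i - βstar i|) ≤ 3 * ∑ i ∈ T, |βhat i - βstar i| := by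
  have h_basic := lassoObj_basic_inequality X ytil μ hopt
  have h_holder := (dotProduct_le_vecSupNorm_mul_sum_abs _ (βhat - βstar)).trans
    (mul_le_mul_of_nonneg_right hgrad (sum_nonneg fun i _ => abs_nonneg _))
  have h_split : ∑ i, |(βhat - βstar) i|
      = ∑ i ∈ T, |βhat i - βstar i| + ∑ i ∈ Tᶜ, |βhat i - βstar i| :=
    (sum_add_sum_compl T _).symm
  have h_support := sum_abs_sub_sum_abs_le_of_eq_zero_off T hsupp βhat
  nlinarith

/-- Cone condition for the error of a Lasso (near-)minimizer. -/
theorem stmt_13 (p n : ℕ) (hn : 0 < n)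
    (X : Matrix (Fin p) (Fin n) ℝ) (ytil : Fin n → ℝ) (μ : ℝ) (hμ : 0 < μ)
    (βstar : Fin p → ℝ) (T : Finset (Fin p)) (hsupp : ∀ i ∉ T, βstar i = 0)
    (βhat : Fin p → ℝ)
    (hopt : lassoObj X ytil μ βhat ≤ lassoObj X ytil μ βstar)
    (hgrad : vecSupNorm ((n : ℝ)⁻¹ • X.mulVec (ytil - Xᵀ.mulVec βstar)) ≤ μ / 2) :
    (∑ i ∈ Tᶜ, |βhat i - βstar i|) ≤ 3 * ∑ i ∈ T, |βhat i - βstar i| :=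
  stmt_13_general p n X ytil μ hμ βstar T hsupp βhat hopt hgrad
end

section
/- Let X be a p × n real matrix, ỹ ∈ ℝ^n, and μ > 0. If β̂ ∈ ℝ^p is a global minimizer of the Lasso objective L(β) = (1/(2n)) ‖ỹ − X^τ β‖_2^2 + μ ‖β‖_1, then ‖ (1/n) X (ỹ − X^τ β̂) ‖_∞ ≤ μ; equivalently, (1/n) ‖X X^τ β̂ − X ỹ‖_∞ ≤ μ. -/
/-!
Perturb a minimizer `β̂` in a single coordinate, `β̂ + t eᵢ`. The least-squares term changes by
`-t gᵢ + O(t²)` with `g = (1/n) X (ỹ - Xᵀβ̂)`, while the `ℓ¹` penalty grows by at most `μ |t|`.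
Optimality for every `t` of either sign and arbitrarily small size forces `|gᵢ| ≤ μ`: this is the
subgradient condition `g ∈ μ ∂‖β̂‖₁`, read off coordinatewise without subdifferential calculus.
-/

open Matrix

open Filter Topology

theorem le_of_forall_pos_le_add_mul {a b c : ℝ} (h : ∀ t > 0, a ≤ c + t * b) : a ≤ c := by
  have hlim : Tendsto (fun t : ℝ => c + t * b) (𝓝[>] 0) (𝓝 c) := by
    have : Tendsto (fun t : ℝ => c + t * b) (𝓝 0) (𝓝 (c + 0 * b)) :=
      tendsto_const_nhds.add (tendsto_id.mul tendsto_const_nhds)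
    simpa using this.mono_left nhdsWithin_le_nhds
  exact ge_of_tendsto hlim (eventually_nhdsWithin_of_forall h)

theorem abs_le_of_forall_mul_le_mul_abs_add_sq {a b c : ℝ} (h : ∀ t : ℝ, t * a ≤ c * |t| + t ^ 2 * b) :
    |a| ≤ c := by
  refine abs_le'.mpr ⟨le_of_forall_pos_le_add_mul (b := b) fun t ht => ?_,
    le_of_forall_pos_le_add_mul (b := b) fun t ht => ?_⟩
  · have hpos := h t
    rw [abs_of_pos ht] at hpos
    nlinarith
  · have hneg := h (-t)
    rw [abs_neg, abs_of_pos ht] at hneg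
    nlinarith

theorem sum_abs_add_single_le {ι : Type*} [Fintype ι] [DecidableEq ι] (β : ι → ℝ) (i : ι)
    (t : ℝ) : ∑ k, |(β + Pi.single i t : ι → ℝ) k| ≤ ∑ k, |β k| + |t| := by
  have hsingle : ∑ k, |(Pi.single i t : ι → ℝ) k| = |t| := by
    simp_rw [Pi.apply_single (fun _ => abs) (fun _ => abs_zero)]
    simp
  calc ∑ k, |(β + Pi.single i t : ι → ℝ) k| ≤ ∑ k, (|β k| + |(Pi.single i t : ι → ℝ) k|) :=
        Finset.sum_le_sum fun k _ => abs_add_le _ _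
    _ = ∑ k, |β k| + |t| := by rw [Finset.sum_add_distrib, hsingle]

theorem lassoObj_add_single_le {p n : ℕ} (X : Matrix (Fin p) (Fin n) ℝ) (ytil : Fin n → ℝ)
    {μ : ℝ} (hμ : 0 ≤ μ) (β : Fin p → ℝ) (i : Fin p) (t : ℝ) :
    lassoObj X ytil μ (β + Pi.single i t) ≤ lassoObj X ytil μ β
      - t * ((n : ℝ)⁻¹ * (X *ᵥ (ytil - Xᵀ *ᵥ β)) i)
      + t ^ 2 * ((2 * n : ℝ)⁻¹ * ∑ j, X i j ^ 2) + μ * |t| := by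
  set r := ytil - Xᵀ *ᵥ β
  have hres : ∑ j, (ytil j - (Xᵀ *ᵥ (β + Pi.single i t)) j) ^ 2
      = ∑ j, r j ^ 2 - 2 * t * (X *ᵥ r) i + t ^ 2 * ∑ j, X i j ^ 2 := by
    have hcol : ∀ j, (Xᵀ *ᵥ Pi.single i t) j = t * X i j := fun j => by
      simp [mulVec_single, mul_comm]
    calc _ = ∑ j, (r j ^ 2 - 2 * t * (X i j * r j) + t ^ 2 * X i j ^ 2) :=
          Finset.sum_congr rfl fun j _ => by
            simp only [r, mulVec_add, Pi.add_apply, Pi.sub_apply, hcol]; ring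
      _ = _ := by
        simp only [Finset.sum_add_distrib, Finset.sum_sub_distrib, ← Finset.mul_sum]; rfl
  have hl1 := mul_le_mul_of_nonneg_left (sum_abs_add_single_le β i t) hμ
  simp only [lassoObj, hres, one_div, mul_inv]
  linear_combination hl1

theorem abs_smul_mulVec_residual_le {p n : ℕ} (X : Matrix (Fin p) (Fin n) ℝ)
    (ytil : Fin n → ℝ) {μ : ℝ} (hμ : 0 ≤ μ) {βhat : Fin p → ℝ}
    (hopt : ∀ β : Fin p → ℝ, lassoObj X ytil μ βhat ≤ lassoObj X ytil μ β) (i : Fin p) :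
    |((n : ℝ)⁻¹ • X *ᵥ (ytil - Xᵀ *ᵥ βhat)) i| ≤ μ := by
  refine abs_le_of_forall_mul_le_mul_abs_add_sq (b := ((2 * n : ℝ)⁻¹ * ∑ j, X i j ^ 2)) fun t => ?_
  have hperturb := (hopt _).trans (lassoObj_add_single_le X ytil hμ βhat i t)
  simp only [Pi.smul_apply, smul_eq_mul]
  linarith

theorem vecSupNorm_le {ι : Type*} [Fintype ι] {v : ι → ℝ} {c : ℝ} (hc : 0 ≤ c)
    (h : ∀ i, |v i| ≤ c) : vecSupNorm v ≤ c :=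
  Real.iSup_le h hc

theorem stmt_14_general (p n : ℕ)
    (X : Matrix (Fin p) (Fin n) ℝ) (ytil : Fin n → ℝ) (μ : ℝ) (hμ : 0 < μ)
    (βhat : Fin p → ℝ)
    (hopt : ∀ β : Fin p → ℝ, lassoObj X ytil μ βhat ≤ lassoObj X ytil μ β) :
    vecSupNorm ((n : ℝ)⁻¹ • X.mulVec (ytil - Xᵀ.mulVec βhat)) ≤ μ ∧
    vecSupNorm ((n : ℝ)⁻¹ • ((X * Xᵀ).mulVec βhat - X.mulVec ytil)) ≤ μ := by
  have hbound := abs_smul_mulVec_residual_le X ytil hμ.le hopt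
  have hneg : (X * Xᵀ) *ᵥ βhat - X *ᵥ ytil = -(X *ᵥ (ytil - Xᵀ *ᵥ βhat)) := by
    rw [← mulVec_mulVec, mulVec_sub, neg_sub]
  refine ⟨vecSupNorm_le hμ.le hbound, vecSupNorm_le hμ.le fun i => ?_⟩
  rw [hneg, smul_neg, Pi.neg_apply, abs_neg]
  exact hbound i

/-- KKT-type bound at a global minimizer of the Lasso objective. -/
theorem stmt_14 (p n : ℕ) (hn : 0 < n)
    (X : Matrix (Fin p) (Fin n) ℝ) (ytil : Fin n → ℝ) (μ : ℝ) (hμ : 0 < μ)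
    (βhat : Fin p → ℝ)
    (hopt : ∀ β : Fin p → ℝ, lassoObj X ytil μ βhat ≤ lassoObj X ytil μ β) :
    vecSupNorm ((n : ℝ)⁻¹ • X.mulVec (ytil - Xᵀ.mulVec βhat)) ≤ μ ∧
    vecSupNorm ((n : ℝ)⁻¹ • ((X * Xᵀ).mulVec βhat - X.mulVec ytil)) ≤ μ :=
  stmt_14_general p n X ytil μ hμ βhat hopt
end
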